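/- arXiv:2012.05457 — 2 statements merged into one kernel-verified Lean document; each statement's English description precedes it below -/
import Mathlib

section
/- If the power sums agree, the ordered tuples agree: for x, y ∈ [0,1]^M with x₁ ≤ ⋯ ≤ x_M and y₁ ≤ ⋯ ≤ y_M, if Σ_{m=1}^M x_m^k = Σ_{m=1}^M y_m^k for every k ∈ {1,…,M}, then x = y. -/
/-!
Newton's identities express the elementary symmetric functions of `M` numbers through their
first `M` power sums (division by `k` is harmless in characteristic zero), so equal power sums
give equal elementary symmetric functions. These are, up to sign, the coefficients of
`∏ (X - xₘ)`, so both tuples are the roots of one polynomial, i.e. they agree as multisets;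
a multiset has only one nondecreasing enumeration.
-/

open MvPolynomial Finset

theorem Multiset.eq_of_esymm_eq {R : Type*} [CommRing R] [IsDomain R] {s t : Multiset R}
    (hcard : card s = card t) (h : ∀ k ≤ card s, s.esymm k = t.esymm k) : s = t := by
  have hprod : (s.map fun a ↦ Polynomial.X - Polynomial.C a).prod =
      (t.map fun a ↦ Polynomial.X - Polynomial.C a).prod := by
    ext k
    by_cases hk : k ≤ card s
    · rw [prod_X_sub_C_coeff s hk, prod_X_sub_C_coeff t (hcard ▸ hk), hcard,
        h _ (hcard ▸ Nat.sub_le _ _)]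
    · rw [Polynomial.coeff_eq_zero_of_natDegree_lt, Polynomial.coeff_eq_zero_of_natDegree_lt] <;>
        rw [Polynomial.natDegree_multiset_prod_X_sub_C_eq_card] <;> omega
  simpa only [Polynomial.roots_multiset_prod_X_sub_C] using congrArg Polynomial.roots hprod

section PowerSums

variable {σ R : Type*} [Fintype σ] [CommRing R] [IsDomain R] [CharZero R]

theorem MvPolynomial.eval_esymm_eq_of_eval_psum_eq {f g : σ → R}
    (h : ∀ k ∈ Icc 1 (Fintype.card σ), eval f (psum σ R k) = eval g (psum σ R k)) :
    ∀ k ≤ Fintype.card σ, eval f (esymm σ R k) = eval g (esymm σ R k) := by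
  intro k
  induction k using Nat.strong_induction_on with
  | _ k ih =>
    intro hk
    rcases Nat.eq_zero_or_pos k with rfl | hk0
    · simp
    have newton := fun v : σ → R ↦ congrArg (eval v) (mul_esymm_eq_sum σ R k)
    simp only [map_mul, map_sum, map_pow, map_neg, map_one, map_natCast] at newton
    refine mul_left_cancel₀ (Nat.cast_ne_zero.mpr hk0.ne' : (k : R) ≠ 0) ?_
    rw [newton f, newton g]
    congr 1
    refine sum_congr rfl fun a ha ↦ ?_
    obtain ⟨hsum, hlt⟩ : a.1 + a.2 = k ∧ a.1 < k := by simpa using ha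
    rw [ih a.1 hlt (by omega), h a.2 (by rw [mem_Icc]; omega)]

theorem Fintype.univ_map_eq_of_sum_pow_eq {f g : σ → R}
    (h : ∀ k ∈ Icc 1 (Fintype.card σ), ∑ i, f i ^ k = ∑ i, g i ^ k) :
    univ.val.map f = univ.val.map g := by
  refine Multiset.eq_of_esymm_eq (by simp) fun k hk ↦ ?_
  simp only [← aeval_esymm_eq_multiset_esymm σ R]
  refine eval_esymm_eq_of_eval_psum_eq (fun j hj ↦ ?_) k (by simpa using hk)
  simpa [psum] using h j hj

end PowerSums

theorem Fin.eq_of_monotone_of_univ_map_eq {α : Type*} [LinearOrder α] {n : ℕ}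
    {f g : Fin n → α} (hf : Monotone f) (hg : Monotone g)
    (h : univ.val.map f = univ.val.map g) : f = g := by
  rw [Fin.univ_val_map, Fin.univ_val_map, Multiset.coe_eq_coe] at h
  exact List.ofFn_injective <| h.eq_of_sortedLE (List.sortedLE_ofFn_iff.mpr hf)
    (List.sortedLE_ofFn_iff.mpr hg)

theorem eq_of_powerSums_eq_general (M : ℕ) (x y : Fin M → ℝ)
    (hxmono : Monotone x) (hymono : Monotone y)
    (hps : ∀ k ∈ Finset.Icc 1 M, ∑ m, (x m) ^ k = ∑ m, (y m) ^ k) :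
    x = y :=
  Fin.eq_of_monotone_of_univ_map_eq hxmono hymono
    (Fintype.univ_map_eq_of_sum_pow_eq (by simpa using hps))

/-- If the power sums of order `1,…,M` of two nondecreasing `M`-tuples in `[0,1]`
agree, then the tuples agree. -/
theorem eq_of_powerSums_eq (M : ℕ) (hM : 0 < M) (x y : Fin M → ℝ)
    (hx : ∀ m, x m ∈ Set.Icc (0 : ℝ) 1) (hy : ∀ m, y m ∈ Set.Icc (0 : ℝ) 1)
    (hxmono : Monotone x) (hymono : Monotone y)
    (hps : ∀ k ∈ Finset.Icc 1 M, ∑ m, (x m) ^ k = ∑ m, (y m) ^ k) :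
    x = y :=
  eq_of_powerSums_eq_general M x y hxmono hymono hps
end

section
/- Let h : [0,1]^{M₁+⋯+M_K} → ℝ be a K-group permutation-invariant continuous function. Then there exist continuous functions ρ̄ : ℝ^{K+M_K} → ℝ and φ̄_k : ℝ → ℝ^{K+M_K} for k = 1,…,K (where M_K = Σ_k M_k) such that h(x) = ρ̄(Σ_{k=1}^K Σ_{m=1}^{M_k} φ̄_k(x_m^{(k)})) for all x. -/
/-!
The block power sums `∑ₘ (x⁽ᵏ⁾ₘ)ⁱ`, `0 ≤ i ≤ M_k`, determine each group `x⁽ᵏ⁾` up to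
permutation: by Newton's identities they determine the elementary symmetric polynomials, hence
the polynomial `∏ₘ (X - x⁽ᵏ⁾ₘ)` and its multiset of roots. So the invariant function `h` is
constant on the fibres of this continuous map. Restricted to the compact cube the map is closed,
hence a quotient map onto its image, so `h` descends to a continuous function on the (closed)
image, which Tietze extends to all of `ℝ^{K + ∑ M_k}`.
-/

open Finset Polynomial Topology

universe u v

section PowerSums

variable {R ι : Type*} [CommRing R] [IsDomain R] [CharZero R] [Fintype ι]

theorem esymm_map_univ_eq_of_psum_eq {f g : ι → R}
    (hp : ∀ i ∈ Icc 1 (Fintype.card ι), ∑ m, f m ^ i = ∑ m, g m ^ i) :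
    ∀ k ≤ Fintype.card ι, (univ.val.map f).esymm k = (univ.val.map g).esymm k := by
  have newton (v : ι → R) (k : ℕ) :
      k * (univ.val.map v).esymm k = (-1) ^ (k + 1) * ∑ a ∈ antidiagonal k with a.1 < k,
        (-1) ^ a.1 * (univ.val.map v).esymm a.1 * ∑ m, v m ^ a.2 := by
    have := congrArg (MvPolynomial.aeval v) (MvPolynomial.mul_esymm_eq_sum ι R k)
    simpa only [MvPolynomial.psum, MvPolynomial.aeval_esymm_eq_multiset_esymm,
      MvPolynomial.aeval_X, map_mul, map_sum, map_pow, map_neg, map_one, map_natCast] using this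
  intro k
  induction k using Nat.strong_induction_on with
  | _ k ih =>
    intro hk
    rcases k.eq_zero_or_pos with rfl | hk0
    · simp [Multiset.esymm]
    refine mul_left_cancel₀ (Nat.cast_ne_zero.mpr hk0.ne') ?_
    rw [newton f, newton g]
    congr 1
    refine sum_congr rfl fun a ha => ?_
    rw [mem_filter, HasAntidiagonal.mem_antidiagonal] at ha
    rw [ih a.1 ha.2 (by omega), hp a.2 (mem_Icc.mpr ⟨by omega, by omega⟩)]

theorem map_univ_eq_of_psum_eq {f g : ι → R}
    (hp : ∀ i ∈ Icc 1 (Fintype.card ι), ∑ m, f m ^ i = ∑ m, g m ^ i) :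
    univ.val.map f = univ.val.map g := by
  have hprod : ((univ.val.map f).map fun a => X - C a).prod
      = ((univ.val.map g).map fun a => X - C a).prod := by
    rw [Multiset.prod_X_sub_X_eq_sum_esymm, Multiset.prod_X_sub_X_eq_sum_esymm]
    simp only [Multiset.card_map, card_val, card_univ]
    refine sum_congr rfl fun j hj => ?_
    rw [esymm_map_univ_eq_of_psum_eq hp j (Nat.lt_succ_iff.mp (mem_range.mp hj))]
  simpa only [roots_multiset_prod_X_sub_C] using congrArg roots hprod

end PowerSums

theorem Equiv.Perm.exists_eq_comp_of_map_univ_eq {ι α : Type*} [Fintype ι] {f g : ι → α}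
    (h : univ.val.map f = univ.val.map g) : ∃ σ : Equiv.Perm ι, f = g ∘ σ := by
  classical
  have hfiber (a : α) : {i // f i = a} ≃ {i // g i = a} := by
    refine Fintype.equivOfCardEq ?_
    have hcount := congrArg (Multiset.count a) h
    simp only [Multiset.count_map, ← filter_val, card_val] at hcount
    simpa only [Fintype.card_subtype, eq_comm] using hcount
  exact ⟨Equiv.ofFiberEquiv hfiber, funext fun i => (Equiv.ofFiberEquiv_map hfiber i).symm⟩

theorem ContinuousOn.exists_continuous_eq_comp {X : Type*} {Y : Type u} {Z : Type v}
    [TopologicalSpace X] [TopologicalSpace Y] [T2Space Y] [NormalSpace Y]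
    [TopologicalSpace Z] [TietzeExtension.{u} Z] {C : Set X} {q : X → Y} {h : X → Z}
    (hh : ContinuousOn h C) (hC : IsCompact C) (hq : Continuous q)
    (hfib : ∀ x ∈ C, ∀ y ∈ C, q x = q y → h x = h y) :
    ∃ ρ : Y → Z, Continuous ρ ∧ ∀ x ∈ C, h x = ρ (q x) := by
  have : CompactSpace C := isCompact_iff_compactSpace.mp hC
  let q' : C(C, q '' C) :=
    ⟨C.imageFactorization q, (hq.comp continuous_subtype_val).subtype_mk _⟩
  have hq' : IsQuotientMap q' :=
    q'.continuous.isClosedMap.isQuotientMap q'.continuous Set.imageFactorization_surjective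
  let g : C(C, Z) := ⟨C.domRestrict h, hh.domRestrict⟩
  have hg : Function.FactorsThrough g q' := fun a b hab =>
    hfib a a.2 b b.2 (congrArg Subtype.val hab)
  let ρ₀ := hq'.lift g hg
  obtain ⟨ρ, hρ⟩ := ρ₀.exists_restrict_eq (hC.image hq).isClosed
  refine ⟨ρ, ρ.continuous, fun x hx => ?_⟩
  calc h x = ρ₀ (q' ⟨x, hx⟩) := (DFunLike.congr_fun (hq'.lift_comp g hg) ⟨x, hx⟩).symm
    _ = ρ (q x) := by rw [← hρ]; rfl

section BlockPowers

variable {ι R : Type*} [DecidableEq ι] (M : ι → ℕ) [CommRing R]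

/-- The paper's `φ̄_k`, with the coordinates of `ℝ^{K + ∑ M_k}` indexed by pairs `(k, i)`,
`i ≤ M k`. -/
def blockPowers (k : ι) (t : R) : (Σ k, Fin (M k + 1)) → R :=
  fun j => if j.1 = k then t ^ (j.2 : ℕ) else 0

theorem continuous_blockPowers [TopologicalSpace R] [IsTopologicalRing R] (k : ι) :
    Continuous (blockPowers M k : R → _) := by
  refine continuous_pi fun j => ?_
  unfold blockPowers
  split_ifs
  · exact continuous_pow _
  · exact continuous_const

theorem sum_blockPowers_apply [Fintype ι] (x : ∀ k, Fin (M k) → R) (k : ι)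
    (i : Fin (M k + 1)) :
    (∑ k, ∑ m, blockPowers M k (x k m)) ⟨k, i⟩ = ∑ m, x k m ^ (i : ℕ) := by
  simp [blockPowers, Finset.sum_apply]

theorem exists_perm_of_sum_blockPowers_eq [Fintype ι] [IsDomain R] [CharZero R]
    {M : ι → ℕ} {x y : ∀ k, Fin (M k) → R}
    (hxy : ∑ k, ∑ m, blockPowers M k (x k m) = ∑ k, ∑ m, blockPowers M k (y k m)) (k : ι) :
    ∃ σ : Equiv.Perm (Fin (M k)), x k = y k ∘ σ := by
  refine Equiv.Perm.exists_eq_comp_of_map_univ_eq (map_univ_eq_of_psum_eq fun i hi => ?_)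
  rw [Fintype.card_fin, mem_Icc] at hi
  have hcoord := congrFun hxy ⟨k, ⟨i, by omega⟩⟩
  rwa [sum_blockPowers_apply, sum_blockPowers_apply] at hcoord

end BlockPowers

theorem heteroDeepSets_representation_general (K : ℕ) (M : Fin K → ℕ)
    (h : (∀ k : Fin K, Fin (M k) → ℝ) → ℝ)
    (hcont : ContinuousOn h
      {x : ∀ k : Fin K, Fin (M k) → ℝ | ∀ k m, x k m ∈ Set.Icc (0 : ℝ) 1})
    (hinv : ∀ (π : ∀ k : Fin K, Equiv.Perm (Fin (M k)))
      (x : ∀ k : Fin K, Fin (M k) → ℝ),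
      (∀ k m, x k m ∈ Set.Icc (0 : ℝ) 1) → h (fun k => x k ∘ π k) = h x) :
    ∃ (ρ : (Fin (K + ∑ k, M k) → ℝ) → ℝ)
      (φ : Fin K → ℝ → (Fin (K + ∑ k, M k) → ℝ)),
      Continuous ρ ∧ (∀ k, Continuous (φ k)) ∧
        ∀ x : ∀ k : Fin K, Fin (M k) → ℝ, (∀ k m, x k m ∈ Set.Icc (0 : ℝ) 1) →
          h x = ρ (∑ k, ∑ m, φ k (x k m)) := by
  let e : (Σ k, Fin (M k + 1)) ≃ Fin (K + ∑ k, M k) :=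
    Fintype.equivFinOfCardEq (by simp [Fintype.card_sigma, sum_add_distrib, add_comm])
  let φ (k : Fin K) (t : ℝ) := blockPowers M k t ∘ e.symm
  have hφ (k : Fin K) : Continuous (φ k) :=
    continuous_pi fun j => (continuous_apply _).comp (continuous_blockPowers M k)
  have hsum (x : ∀ k, Fin (M k) → ℝ) :
      ∑ k, ∑ m, φ k (x k m) = (∑ k, ∑ m, blockPowers M k (x k m)) ∘ e.symm := by
    ext j
    simp [φ, Finset.sum_apply]
  have hcube :
      IsCompact {x : ∀ k : Fin K, Fin (M k) → ℝ | ∀ k m, x k m ∈ Set.Icc (0 : ℝ) 1} := by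
    simpa only [Set.pi, Set.mem_univ, true_implies, Set.mem_ofPred_eq] using
      isCompact_univ_pi fun k => isCompact_univ_pi fun (_ : Fin (M k)) => isCompact_Icc
  obtain ⟨ρ, hρ, hfac⟩ := hcont.exists_continuous_eq_comp hcube
    (q := fun x => ∑ k, ∑ m, φ k (x k m)) (by fun_prop) fun x _ y hy hxy => by
      rw [hsum, hsum] at hxy
      choose π hπ using
        exists_perm_of_sum_blockPowers_eq (e.symm.surjective.injective_comp_right hxy)
      rw [← hinv π y hy]
      exact congrArg h (funext hπ)
  exact ⟨ρ, φ, hρ, hφ, hfac⟩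

/-- Heterogeneous deep sets representation theorem: every `K`-group
permutation-invariant continuous function `h : [0,1]^{M₁+⋯+M_K} → ℝ` can be written
as `h x = ρ (∑ k, ∑ m, φ k (x k m))` with continuous `ρ : ℝ^{K + M_K} → ℝ` and
`φ k : ℝ → ℝ^{K + M_K}` where `M_K = ∑ k, M k`. -/
theorem heteroDeepSets_representation (K : ℕ) (hK : 0 < K) (M : Fin K → ℕ)
    (h : (∀ k : Fin K, Fin (M k) → ℝ) → ℝ)
    (hcont : ContinuousOn h
      {x : ∀ k : Fin K, Fin (M k) → ℝ | ∀ k m, x k m ∈ Set.Icc (0 : ℝ) 1})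
    (hinv : ∀ (π : ∀ k : Fin K, Equiv.Perm (Fin (M k)))
      (x : ∀ k : Fin K, Fin (M k) → ℝ),
      (∀ k m, x k m ∈ Set.Icc (0 : ℝ) 1) → h (fun k => x k ∘ π k) = h x) :
    ∃ (ρ : (Fin (K + ∑ k, M k) → ℝ) → ℝ)
      (φ : Fin K → ℝ → (Fin (K + ∑ k, M k) → ℝ)),
      Continuous ρ ∧ (∀ k, Continuous (φ k)) ∧
        ∀ x : ∀ k : Fin K, Fin (M k) → ℝ, (∀ k m, x k m ∈ Set.Icc (0 : ℝ) 1) →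
          h x = ρ (∑ k, ∑ m, φ k (x k m)) :=
  heteroDeepSets_representation_general K M h hcont hinv
end
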